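/- Define η_n^{i,1} := 0 for n ≤ 1 and, for n ≥ 2 and i ∈ {0,1}, η_n^{i,1} := (1/H)(n log n − E[I_n^i log I_n^i + (n − I_n^i) log(n − I_n^i)]) + π_{1−i} ((H_{1−i} − H_i)/H) n + ((H_1 − H_0)/((p_{01}+p_{10})H)) p_{i0} p_{i1}^{n−1} n, where I_n^i is binomial B(n, p_{i0}) distributed and 0 log 0 := 0. Let ν_X^0, ν_X^1 : ℕ → ℝ be the (unique) sequences with ν_X^i(0) = ν_X^i(1) = 0 and ν_X^i(n) = E[ν_X^0(I_n^i)] + E[ν_X^1(n − I_n^i)] + η_n^{i,1} for all n ≥ 2 and i ∈ {0,1}. Then for all n ∈ ℕ: ν_X^0(n) = (1/H) n log n + ((H_1 − H_0)/((p_{01}+p_{10})H)) n · 1_{{n ≥ 2}}, and ν_X^1(n) = (1/H) n log n. -/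

import Mathlib

/-!
Two solutions of the recursion that agree below `n ≥ 2` differ at `n` by a vector `u` with
`u i = p i 0 ^ n * u 0 + p i 1 ^ n * u 1`, since `I_n^i` takes the values `n` and `0` with
probabilities `p i 0 ^ n` and `p i 1 ^ n`; as `p i 0 ^ n + p i 1 ^ n < 1`, comparing sup norms
forces `u = 0`. So it suffices to check that the closed form solves the recursion. Writing
`ν^0(k) = k log k / H + c (k - 1_{k = 1})` with `c = (H_1 - H_0) / ((p_01 + p_10) H)`, this only
needs `E[I_n^i] = n p_i0` and `P(I_n^i = 1) = n p_i0 p_i1^(n-1)`, after which the `k log k` terms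
cancel against `η` and what is left is `π_1 (H_1 - H_0) / H = c p_01` and
`π_0 (H_1 - H_0) / H = c p_10`.
-/

open Filter Asymptotics Real

/-- Expectation of `a` under the binomial distribution `B(n, p)`. -/
noncomputable def binomExp (p : ℝ) (n : ℕ) (a : ℕ → ℝ) : ℝ :=
  ∑ k ∈ Finset.range (n + 1), (n.choose k : ℝ) * p ^ k * (1 - p) ^ (n - k) * a k

section binomExp

variable {p : ℝ} {n : ℕ}

lemma binomExp_add (a b : ℕ → ℝ) :
    binomExp p n (fun k => a k + b k) = binomExp p n a + binomExp p n b := by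
  simp only [binomExp, mul_add, Finset.sum_add_distrib]

lemma binomExp_sub (a b : ℕ → ℝ) :
    binomExp p n (fun k => a k - b k) = binomExp p n a - binomExp p n b := by
  simp only [binomExp, mul_sub, Finset.sum_sub_distrib]

lemma binomExp_const_mul (r : ℝ) (a : ℕ → ℝ) :
    binomExp p n (fun k => r * a k) = r * binomExp p n a := by
  simp only [binomExp, Finset.mul_sum]
  exact Finset.sum_congr rfl fun k _ => by ring

lemma binomExp_eq_single {m : ℕ} (hm : m ≤ n) {a : ℕ → ℝ} (ha : ∀ k ≤ n, k ≠ m → a k = 0) :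
    binomExp p n a = n.choose m * p ^ m * (1 - p) ^ (n - m) * a m :=
  Finset.sum_eq_single_of_mem m (Finset.mem_range.mpr (Nat.lt_succ_of_le hm)) fun k hk hkm => by
    rw [ha k (Nat.lt_succ_iff.mp (Finset.mem_range.mp hk)) hkm, mul_zero]

lemma binomExp_natCast (p : ℝ) (n : ℕ) : binomExp p n (fun k => (k : ℝ)) = n * p := by
  cases n with
  | zero => simp [binomExp]
  | succ n =>
    have hterm : ∀ j ∈ Finset.range (n + 1),
        ((n + 1).choose (j + 1) : ℝ) * p ^ (j + 1) * (1 - p) ^ (n + 1 - (j + 1)) * ((j + 1 : ℕ) : ℝ)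
          = (n + 1 : ℝ) * p * (p ^ j * (1 - p) ^ (n - j) * (n.choose j : ℝ)) := by
      intro j _
      have hchoose : ((n + 1).choose (j + 1) : ℝ) * (j + 1 : ℕ) = (n + 1 : ℕ) * n.choose j := by
        exact_mod_cast (Nat.add_one_mul_choose_eq n j).symm
      rw [Nat.add_sub_add_right]
      push_cast at hchoose ⊢
      linear_combination p ^ (j + 1) * (1 - p) ^ (n - j) * hchoose
    rw [binomExp, Finset.sum_range_succ', Finset.sum_congr rfl hterm, ← Finset.mul_sum,
      ← add_pow, add_sub_cancel, one_pow]
    push_cast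
    ring

end binomExp

theorem eq_zero_of_eq_sum_mul_of_sum_lt_one {ι : Type*} [Fintype ι] {A : ι → ι → ℝ} {u : ι → ℝ}
    (hA : ∀ i j, 0 ≤ A i j) (hrow : ∀ i, ∑ j, A i j < 1) (hu : ∀ i, u i = ∑ j, A i j * u j) :
    u = 0 := by
  by_contra hne
  have hpos : 0 < ‖u‖ := norm_pos_iff.mpr hne
  refine lt_irrefl ‖u‖ ((pi_norm_lt_iff hpos).mpr fun i => ?_)
  calc ‖u i‖ = ‖∑ j, A i j * u j‖ := by rw [← hu i]
    _ ≤ ∑ j, A i j * ‖u‖ := (norm_sum_le _ _).trans <| Finset.sum_le_sum fun j _ => by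
        rw [norm_mul, Real.norm_of_nonneg (hA i j)]
        exact mul_le_mul_of_nonneg_left (norm_le_pi_norm u j) (hA i j)
    _ = (∑ j, A i j) * ‖u‖ := by rw [Finset.sum_mul]
    _ < ‖u‖ := mul_lt_of_lt_one_left hpos (hrow i)

lemma pow_add_pow_lt_one {x y : ℝ} (hx : x ∈ Set.Ioo 0 1) (hy : y ∈ Set.Ioo 0 1) (hxy : x + y = 1)
    {n : ℕ} (hn : 2 ≤ n) : x ^ n + y ^ n < 1 := by
  have := pow_lt_self_of_lt_one₀ hx.1 hx.2 hn
  have := pow_lt_self_of_lt_one₀ hy.1 hy.2 hn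
  linarith

def SolvesBinomialSplitting (q : Fin 2 → ℝ) (η ν : Fin 2 → ℕ → ℝ) : Prop :=
  ∀ i n, 2 ≤ n →
    ν i n = binomExp (q i) n (ν 0) + binomExp (q i) n (fun k => ν 1 (n - k)) + η i n

theorem SolvesBinomialSplitting.unique {q : Fin 2 → ℝ} {η ν μ : Fin 2 → ℕ → ℝ}
    (hq : ∀ i, q i ∈ Set.Ioo 0 1) (hν : SolvesBinomialSplitting q η ν)
    (hμ : SolvesBinomialSplitting q η μ) (h0 : ∀ i, ν i 0 = μ i 0) (h1 : ∀ i, ν i 1 = μ i 1) :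
    ν = μ := by
  suffices ∀ n i, ν i n = μ i n from funext fun i => funext fun n => this n i
  intro n
  induction n using Nat.strong_induction_on with
  | _ n ih =>
    rcases lt_or_ge n 2 with hn | hn
    · interval_cases n
      exacts [h0, h1]
    have hdiff : ∀ i, ν i n - μ i n =
        ∑ j, ![q i, 1 - q i] j ^ n * (ν j n - μ j n) := by
      intro i
      have hleft : binomExp (q i) n (ν 0) - binomExp (q i) n (μ 0) = q i ^ n * (ν 0 n - μ 0 n) := by
        rw [← binomExp_sub, binomExp_eq_single le_rfl fun k hk hkn =>
          sub_eq_zero.mpr (ih k (lt_of_le_of_ne hk hkn) 0)]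
        simp
      have hright : binomExp (q i) n (fun k => ν 1 (n - k))
          - binomExp (q i) n (fun k => μ 1 (n - k)) = (1 - q i) ^ n * (ν 1 n - μ 1 n) := by
        rw [← binomExp_sub, binomExp_eq_single (Nat.zero_le n) fun k hk hk0 =>
          sub_eq_zero.mpr (ih (n - k) (by omega) 1)]
        simp
      rw [hν i n hn, hμ i n hn, Fin.sum_univ_two]
      simp only [Matrix.cons_val_zero, Matrix.cons_val_one]
      linear_combination hleft + hright
    have hq' : ∀ i, 1 - q i ∈ Set.Ioo 0 1 := fun i =>
      ⟨by linarith [(hq i).2], by linarith [(hq i).1]⟩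
    have hnonneg : ∀ i j, 0 ≤ ![q i, 1 - q i] j ^ n := fun i j => by
      fin_cases j
      exacts [pow_nonneg (hq i).1.le n, pow_nonneg (hq' i).1.le n]
    have hrow : ∀ i, ∑ j, ![q i, 1 - q i] j ^ n < 1 := fun i => by
      simpa [Fin.sum_univ_two] using pow_add_pow_lt_one (hq i) (hq' i) (add_sub_cancel _ _) hn
    have hzero := eq_zero_of_eq_sum_mul_of_sum_lt_one hnonneg hrow hdiff
    exact fun i => sub_eq_zero.mp (congrFun hzero i)

noncomputable def closedForm (H c : ℝ) : Fin 2 → ℕ → ℝ :=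
  ![fun n => 1 / H * ((n : ℝ) * Real.log n) + c * n * (if 2 ≤ n then (1 : ℝ) else 0),
    fun n => 1 / H * ((n : ℝ) * Real.log n)]

lemma closedForm_zero_eq (H c : ℝ) (k : ℕ) :
    closedForm H c 0 k
      = 1 / H * ((k : ℝ) * Real.log k) + c * ((k : ℝ) - if k = 1 then 1 else 0) := by
  rcases k with _ | _ | k <;> simp [closedForm]

lemma binomExp_closedForm_zero (H c q : ℝ) {n : ℕ} (hn : 1 ≤ n) :
    binomExp q n (closedForm H c 0) = 1 / H * binomExp q n (fun k => (k : ℝ) * Real.log k)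
      + c * n * q - c * n * q * (1 - q) ^ (n - 1) := by
  have hindicator :
      binomExp q n (fun k => if k = 1 then (1 : ℝ) else 0) = n * q * (1 - q) ^ (n - 1) := by
    rw [binomExp_eq_single hn fun k _ hk => if_neg hk]
    simp
  rw [funext (closedForm_zero_eq H c), binomExp_add, binomExp_const_mul, binomExp_const_mul,
    binomExp_sub, binomExp_natCast, hindicator]
  ring

lemma binomExp_closedForm_one_sub (H c q : ℝ) (n : ℕ) :
    binomExp q n (fun k => closedForm H c 1 (n - k))
      = 1 / H * binomExp q n (fun k => ((n - k : ℕ) : ℝ) * Real.log ((n - k : ℕ) : ℝ)) :=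
  binomExp_const_mul _ _

theorem closedForm_solvesBinomialSplitting {p : Fin 2 → Fin 2 → ℝ} (hsum : ∀ i, p i 0 + p i 1 = 1)
    (hp : p 0 1 + p 1 0 ≠ 0) {pi' H' : Fin 2 → ℝ} {H : ℝ}
    (hpi0 : pi' 0 = p 1 0 / (p 0 1 + p 1 0)) (hpi1 : pi' 1 = p 0 1 / (p 0 1 + p 1 0))
    (hH : H ≠ 0) {η : Fin 2 → ℕ → ℝ}
    (hη : ∀ i : Fin 2, ∀ n : ℕ, 2 ≤ n →
      η i n = 1 / H * ((n : ℝ) * Real.log n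
          - binomExp (p i 0) n
              (fun k => (k : ℝ) * Real.log k + ((n - k : ℕ) : ℝ) * Real.log ((n - k : ℕ) : ℝ)))
        + pi' (1 - i) * ((H' (1 - i) - H' i) / H) * n
        + (H' 1 - H' 0) / ((p 0 1 + p 1 0) * H) * p i 0 * p i 1 ^ (n - 1) * n) :
    SolvesBinomialSplitting (fun i => p i 0) η
      (closedForm H ((H' 1 - H' 0) / ((p 0 1 + p 1 0) * H))) := by
  intro i n hn
  rw [binomExp_closedForm_zero _ _ _ (by omega), binomExp_closedForm_one_sub, hη i n hn,
    binomExp_add, show 1 - p i 0 = p i 1 by linarith [hsum i]]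
  obtain rfl | rfl : i = 0 ∨ i = 1 := by omega
  · have hcoef : pi' 1 * ((H' 1 - H' 0) / H) = (H' 1 - H' 0) / ((p 0 1 + p 1 0) * H) * p 0 1 := by
      rw [hpi1]; field_simp
    simp only [closedForm, Matrix.cons_val_zero, if_pos hn, sub_zero]
    linear_combination -(n : ℝ) * (hcoef + (H' 1 - H' 0) / ((p 0 1 + p 1 0) * H) * hsum 0)
  · have hcoef :
        pi' 0 * ((H' 0 - H' 1) / H) = -((H' 1 - H' 0) / ((p 0 1 + p 1 0) * H) * p 1 0) := by
      rw [hpi0]; field_simp; ring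
    simp only [closedForm, Matrix.cons_val_one, Matrix.cons_val_zero, sub_self]
    linear_combination -(n : ℝ) * hcoef

theorem stmt9_general (p : Fin 2 → Fin 2 → ℝ)
    (hp : ∀ i j, p i j ∈ Set.Ioo (0 : ℝ) 1)
    (hsum : ∀ i, p i 0 + p i 1 = 1)
    (pi' H' : Fin 2 → ℝ) (H : ℝ)
    (hpi0 : pi' 0 = p 1 0 / (p 0 1 + p 1 0))
    (hpi1 : pi' 1 = p 0 1 / (p 0 1 + p 1 0))
    (hHpos : 0 < H)
    (η : Fin 2 → ℕ → ℝ)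
    (hη : ∀ i : Fin 2, ∀ n : ℕ, 2 ≤ n →
      η i n = 1 / H * ((n : ℝ) * Real.log n
          - binomExp (p i 0) n
              (fun k => (k : ℝ) * Real.log k + ((n - k : ℕ) : ℝ) * Real.log ((n - k : ℕ) : ℝ)))
        + pi' (1 - i) * ((H' (1 - i) - H' i) / H) * n
        + (H' 1 - H' 0) / ((p 0 1 + p 1 0) * H) * p i 0 * p i 1 ^ (n - 1) * n)
    (νX : Fin 2 → ℕ → ℝ)
    (hinit : ∀ i : Fin 2, νX i 0 = 0 ∧ νX i 1 = 0)
    (hrec : ∀ i : Fin 2, ∀ n : ℕ, 2 ≤ n →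
      νX i n = binomExp (p i 0) n (νX 0) + binomExp (p i 0) n (fun k => νX 1 (n - k)) + η i n) :
    ∀ n : ℕ,
      νX 0 n = 1 / H * ((n : ℝ) * Real.log n)
          + (H' 1 - H' 0) / ((p 0 1 + p 1 0) * H) * n * (if 2 ≤ n then (1 : ℝ) else 0) ∧
      νX 1 n = 1 / H * ((n : ℝ) * Real.log n) := by
  have hsolution := closedForm_solvesBinomialSplitting hsum
    (by linarith [(hp 0 1).1, (hp 1 0).1]) hpi0 hpi1 hHpos.ne' hη
  have hνX := SolvesBinomialSplitting.unique (fun i => hp i 0) hrec hsolution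
    (fun i => by rw [(hinit i).1]; fin_cases i <;> simp [closedForm])
    (fun i => by rw [(hinit i).2]; fin_cases i <;> simp [closedForm])
  subst hνX
  exact fun n => ⟨rfl, rfl⟩

theorem stmt9 (p : Fin 2 → Fin 2 → ℝ)
    (hp : ∀ i j, p i j ∈ Set.Ioo (0 : ℝ) 1)
    (hsum : ∀ i, p i 0 + p i 1 = 1)
    (pi' H' : Fin 2 → ℝ) (H : ℝ)
    (hpi0 : pi' 0 = p 1 0 / (p 0 1 + p 1 0))
    (hpi1 : pi' 1 = p 0 1 / (p 0 1 + p 1 0))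
    (hH' : ∀ i, H' i = -(p i 0 * Real.log (p i 0)) - p i 1 * Real.log (p i 1))
    (hH : H = pi' 0 * H' 0 + pi' 1 * H' 1) (hHpos : 0 < H)
    (η : Fin 2 → ℕ → ℝ)
    (hη0 : ∀ i : Fin 2, ∀ n : ℕ, n ≤ 1 → η i n = 0)
    (hη : ∀ i : Fin 2, ∀ n : ℕ, 2 ≤ n →
      η i n = 1 / H * ((n : ℝ) * Real.log n
          - binomExp (p i 0) n
              (fun k => (k : ℝ) * Real.log k + ((n - k : ℕ) : ℝ) * Real.log ((n - k : ℕ) : ℝ)))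
        + pi' (1 - i) * ((H' (1 - i) - H' i) / H) * n
        + (H' 1 - H' 0) / ((p 0 1 + p 1 0) * H) * p i 0 * p i 1 ^ (n - 1) * n)
    (νX : Fin 2 → ℕ → ℝ)
    (hinit : ∀ i : Fin 2, νX i 0 = 0 ∧ νX i 1 = 0)
    (hrec : ∀ i : Fin 2, ∀ n : ℕ, 2 ≤ n →
      νX i n = binomExp (p i 0) n (νX 0) + binomExp (p i 0) n (fun k => νX 1 (n - k)) + η i n) :
    ∀ n : ℕ,
      νX 0 n = 1 / H * ((n : ℝ) * Real.log n)
          + (H' 1 - H' 0) / ((p 0 1 + p 1 0) * H) * n * (if 2 ≤ n then (1 : ℝ) else 0) ∧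
      νX 1 n = 1 / H * ((n : ℝ) * Real.log n) :=
  stmt9_general p hp hsum pi' H' H hpi0 hpi1 hHpos η hη νX hinit hrec
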